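/- (Marginal law of one chromosome in the neutral Wright–Fisher model.) Consider the neutral case σ = 1, so the Wright–Fisher transition matrix is p(x,y) = ∏_{i=1}^m ((1/m)·Σ_{j=1}^m M(x(j), y(i))). Let μ_0 be an exchangeable probability measure on (𝒜^ℓ)^m (i.e. invariant under permutation of the m coordinates) and let ν_0 be its one-component marginal, ν_0(u) = μ_0({x : x(1) = u}). Then for every n ≥ 0, every i ∈ {1,…,m} and every u ∈ 𝒜^ℓ, Σ_{x : x(i) = u} (μ_0·p^n)(x) = (ν_0·M^n)(u), where μ_0·p^n and ν_0·M^n are given by matrix multiplication (μ_0·p^n)(x) = Σ_y μ_0(y)p^n(y,x) and (ν_0·M^n)(u) = Σ_v ν_0(v)M^n(v,u). -/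
import Mathlib


open Finset

/-- Mutation matrix `M(u,v)`. -/
noncomputable def mutM (κ : ℕ) (q : ℝ) {ℓ : ℕ} (u v : Fin ℓ → Fin κ) : ℝ :=
  ∏ j, if u j = v j then 1 - q else q / ((κ : ℝ) - 1)

/-- `n`-th matrix power of the mutation matrix. -/
noncomputable def mutMn (κ : ℕ) (q : ℝ) {ℓ : ℕ} :
    ℕ → (Fin ℓ → Fin κ) → (Fin ℓ → Fin κ) → ℝ
  | 0 => fun u v => if u = v then 1 else 0
  | n + 1 => fun u v => ∑ w, mutMn κ q n u w * mutM κ q w v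

/-- Neutral Wright–Fisher transition matrix (`σ = 1`):
`p(x,y) = ∏_i ((1/m)·Σ_j M(x(j),y(i)))`. -/
noncomputable def wfPneutral (κ : ℕ) (q : ℝ) {ℓ m : ℕ}
    (x y : Fin m → Fin ℓ → Fin κ) : ℝ :=
  ∏ i, (1 / (m : ℝ)) * ∑ j, mutM κ q (x j) (y i)

/-- `n`-th matrix power of the neutral Wright–Fisher transition matrix. -/
noncomputable def wfPneutraln (κ : ℕ) (q : ℝ) {ℓ m : ℕ} :
    ℕ → (Fin m → Fin ℓ → Fin κ) → (Fin m → Fin ℓ → Fin κ) → ℝ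
  | 0 => fun x y => if x = y then 1 else 0
  | n + 1 => fun x y => ∑ z, wfPneutraln κ q n x z * wfPneutral κ q z y

/-- Algebraic helper: pulling a constant and swapping sums. -/
lemma sum_mul_const_mul_sum {α β : Type*} [Fintype α] [Fintype β]
    (f : α → ℝ) (c : ℝ) (g : α → β → ℝ) :
    ∑ z, f z * (c * ∑ j, g z j) = c * ∑ j, ∑ z, f z * g z j := by
  calc ∑ z, f z * (c * ∑ j, g z j)
      = ∑ z, ∑ j, c * (f z * g z j) := by
        refine Finset.sum_congr rfl fun z _ => ?_
        rw [Finset.mul_sum, Finset.mul_sum]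
        exact Finset.sum_congr rfl fun j _ => by ring
    _ = ∑ j, ∑ z, c * (f z * g z j) := Finset.sum_comm
    _ = c * ∑ j, ∑ z, f z * g z j := by
        rw [Finset.mul_sum]
        exact Finset.sum_congr rfl fun j _ => (Finset.mul_sum _ _ _).symm

/-- Each row of the mutation matrix sums to `1`. -/
lemma sum_mutM_row (κ : ℕ) (hκ : 2 ≤ κ) {ℓ : ℕ} (q : ℝ) (w : Fin ℓ → Fin κ) :
    ∑ v, mutM κ q w v = 1 := by
  have hκ1 : ((κ : ℝ) - 1) ≠ 0 := by
    have h2 : (2 : ℝ) ≤ (κ : ℝ) := by exact_mod_cast hκ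
    linarith
  have hcard : ∀ b : Fin κ,
      ∑ a, (if b = a then (1 : ℝ) - q else q / ((κ : ℝ) - 1)) = 1 := by
    intro b
    have hsplit : ∀ a : Fin κ,
        (if b = a then (1 : ℝ) - q else q / ((κ : ℝ) - 1))
          = (if b = a then (1 - q) - q / ((κ : ℝ) - 1) else 0) + q / ((κ : ℝ) - 1) := by
      intro a; split_ifs <;> ring
    rw [Finset.sum_congr rfl fun a _ => hsplit a, Finset.sum_add_distrib,
      Finset.sum_ite_eq, if_pos (Finset.mem_univ b), Finset.sum_const,
      Finset.card_univ, Fintype.card_fin, nsmul_eq_mul]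
    field_simp
    ring
  have h := (Fintype.prod_sum
    (fun (j : Fin ℓ) (a : Fin κ) => if w j = a then (1 : ℝ) - q else q / ((κ : ℝ) - 1))).symm
  calc ∑ v, mutM κ q w v
      = ∏ j, ∑ a, (if w j = a then (1 : ℝ) - q else q / ((κ : ℝ) - 1)) := h
    _ = 1 := by
        rw [Finset.prod_congr rfl fun j _ => hcard (w j), Finset.prod_const_one]

/-- Summing a row of the neutral Wright–Fisher matrix over the fiber `{x : x i = u}`. -/
lemma sum_wfP_fiber (κ ℓ m : ℕ) (hκ : 2 ≤ κ) (hm : 0 < m) (q : ℝ)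
    (z : Fin m → Fin ℓ → Fin κ) (i : Fin m) (u : Fin ℓ → Fin κ) :
    ∑ x ∈ univ.filter (fun x : Fin m → Fin ℓ → Fin κ => x i = u), wfPneutral κ q z x
      = (1 / (m : ℝ)) * ∑ j, mutM κ q (z j) u := by
  have hmR : (m : ℝ) ≠ 0 := Nat.cast_ne_zero.mpr hm.ne'
  set g : (Fin ℓ → Fin κ) → ℝ := fun v => (1 / (m : ℝ)) * ∑ j, mutM κ q (z j) v with hg
  have hgsum : ∑ v, g v = 1 := by
    rw [hg, ← Finset.mul_sum, Finset.sum_comm]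
    have : ∀ j : Fin m, ∑ v, mutM κ q (z j) v = 1 := fun j => sum_mutM_row κ hκ q (z j)
    rw [Finset.sum_congr rfl fun j _ => this j, Finset.sum_const, Finset.card_univ,
      Fintype.card_fin, nsmul_eq_mul, mul_one]
    field_simp
  set h : Fin m → (Fin ℓ → Fin κ) → ℝ :=
    fun i' v => if i' = i then (if v = u then g v else 0) else g v with hh
  have step1 : ∀ x : Fin m → Fin ℓ → Fin κ,
      (if x i = u then wfPneutral κ q z x else 0) = ∏ i', h i' (x i') := by
    intro x
    by_cases hx : x i = u
    · rw [if_pos hx]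
      show ∏ i', g (x i') = ∏ i', h i' (x i')
      refine Finset.prod_congr rfl fun i' _ => ?_
      by_cases hi : i' = i
      · subst hi; simp [hh, hx]
      · simp [hh, hi]
    · rw [if_neg hx]
      symm
      exact Finset.prod_eq_zero (Finset.mem_univ i) (by simp [hh, hx])
  calc ∑ x ∈ univ.filter (fun x : Fin m → Fin ℓ → Fin κ => x i = u), wfPneutral κ q z x
      = ∑ x : Fin m → Fin ℓ → Fin κ, (if x i = u then wfPneutral κ q z x else 0) :=
        Finset.sum_filter _ _
    _ = ∑ x : Fin m → Fin ℓ → Fin κ, ∏ i', h i' (x i') :=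
        Finset.sum_congr rfl fun x _ => step1 x
    _ = ∏ i', ∑ v, h i' v := by
        rw [Fintype.prod_sum]
    _ = g u := by
        have hcol : ∀ i' : Fin m, ∑ v, h i' v = if i' = i then g u else 1 := by
          intro i'
          by_cases hi : i' = i
          · subst hi
            simp only [hh, if_pos rfl, if_pos rfl]
            rw [Finset.sum_ite_eq' univ u g, if_pos (Finset.mem_univ u)]
            simp
          · simp only [hh, if_neg hi]
            exact hgsum
        rw [Finset.prod_congr rfl fun i' _ => hcol i',
          Finset.prod_ite_eq' univ i (fun _ => g u), if_pos (Finset.mem_univ i)]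

/-- Marginal law of one chromosome in the neutral Wright–Fisher model: started from
an exchangeable law `μ₀`, the law of the `i`-th chromosome at time `n` is
`ν₀·M^n`, where `ν₀` is the one-component marginal of `μ₀`. -/
theorem neutral_marginal_law (κ ℓ m : ℕ) (hκ : 2 ≤ κ) (hℓ : 1 ≤ ℓ) (hm : 0 < m)
    (q : ℝ) (hq0 : 0 < q) (hq1 : q < 1 - 1 / κ)
    (μ₀ : (Fin m → Fin ℓ → Fin κ) → ℝ)
    (hμ0 : ∀ x, 0 ≤ μ₀ x) (hμ1 : ∑ x, μ₀ x = 1)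
    (hexch : ∀ (ρ : Equiv.Perm (Fin m)) (x : Fin m → Fin ℓ → Fin κ),
      μ₀ (fun j => x (ρ j)) = μ₀ x) :
    ∀ (n : ℕ) (i : Fin m) (u : Fin ℓ → Fin κ),
      ∑ x ∈ univ.filter (fun x : Fin m → Fin ℓ → Fin κ => x i = u),
          (∑ y, μ₀ y * wfPneutraln κ q n y x) =
        ∑ v, (∑ x ∈ univ.filter (fun x : Fin m → Fin ℓ → Fin κ => x ⟨0, hm⟩ = v), μ₀ x) *
          mutMn κ q n v u := by
  have hmR : (m : ℝ) ≠ 0 := Nat.cast_ne_zero.mpr hm.ne'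
  set i0 : Fin m := ⟨0, hm⟩ with hi0
  -- the one-component marginals of μ₀ coincide
  have hmarg : ∀ (i : Fin m) (u : Fin ℓ → Fin κ),
      ∑ x ∈ univ.filter (fun x : Fin m → Fin ℓ → Fin κ => x i = u), μ₀ x
        = ∑ x ∈ univ.filter (fun x : Fin m → Fin ℓ → Fin κ => x i0 = u), μ₀ x := by
    intro i u
    refine Finset.sum_nbij' (fun x => fun j => x (Equiv.swap i i0 j))
      (fun x => fun j => x (Equiv.swap i i0 j)) ?_ ?_ ?_ ?_ ?_
    · intro x hx
      simp only [Finset.mem_filter, Finset.mem_univ, true_and] at hx ⊢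
      rw [Equiv.swap_apply_right]; exact hx
    · intro x hx
      simp only [Finset.mem_filter, Finset.mem_univ, true_and] at hx ⊢
      rw [Equiv.swap_apply_left]; exact hx
    · intro x _; funext j; simp
    · intro x _; funext j; simp
    · intro x _; exact (hexch (Equiv.swap i i0) x).symm
  intro n
  induction n with
  | zero =>
    intro i u
    have hL : ∀ x : Fin m → Fin ℓ → Fin κ,
        ∑ y, μ₀ y * wfPneutraln κ q 0 y x = μ₀ x := by
      intro x
      simp only [wfPneutraln, mul_ite, mul_one, mul_zero]
      rw [Finset.sum_ite_eq' univ x μ₀, if_pos (Finset.mem_univ x)]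
    rw [Finset.sum_congr rfl fun x _ => hL x]
    simp only [mutMn, mul_ite, mul_one, mul_zero]
    rw [Finset.sum_ite_eq' univ u
      (fun v => ∑ x ∈ univ.filter (fun x : Fin m → Fin ℓ → Fin κ => x i0 = v), μ₀ x),
      if_pos (Finset.mem_univ u)]
    exact hmarg i u
  | succ n ih =>
    intro i u
    set ν : (Fin m → Fin ℓ → Fin κ) → ℝ := fun z => ∑ y, μ₀ y * wfPneutraln κ q n y z with hν
    have key : ∀ z : Fin m → Fin ℓ → Fin κ,
        ∑ x ∈ univ.filter (fun x : Fin m → Fin ℓ → Fin κ => x i = u), wfPneutral κ q z x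
          = (1 / (m : ℝ)) * ∑ j, mutM κ q (z j) u :=
      fun z => sum_wfP_fiber κ ℓ m hκ hm q z i u
    have hC : ∀ j : Fin m,
        ∑ z, ν z * mutM κ q (z j) u
          = ∑ w, (∑ v, (∑ x ∈ univ.filter
              (fun x : Fin m → Fin ℓ → Fin κ => x i0 = v), μ₀ x) * mutMn κ q n v w)
            * mutM κ q w u := by
      intro j
      rw [← Finset.sum_fiberwise univ (fun z : Fin m → Fin ℓ → Fin κ => z j)
        (fun z => ν z * mutM κ q (z j) u)]
      refine Finset.sum_congr rfl fun w _ => ?_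
      have h1 : ∑ z ∈ univ.filter (fun z : Fin m → Fin ℓ → Fin κ => z j = w),
          ν z * mutM κ q (z j) u
            = (∑ z ∈ univ.filter (fun z : Fin m → Fin ℓ → Fin κ => z j = w), ν z)
              * mutM κ q w u := by
        rw [Finset.sum_mul]
        refine Finset.sum_congr rfl fun z hz => ?_
        simp only [Finset.mem_filter, Finset.mem_univ, true_and] at hz
        rw [hz]
      rw [h1, ih j w]
    calc ∑ x ∈ univ.filter (fun x : Fin m → Fin ℓ → Fin κ => x i = u),
          ∑ y, μ₀ y * wfPneutraln κ q (n + 1) y x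
        = ∑ x ∈ univ.filter (fun x : Fin m → Fin ℓ → Fin κ => x i = u),
            ∑ z, ν z * wfPneutral κ q z x := by
          refine Finset.sum_congr rfl fun x _ => ?_
          simp only [wfPneutraln]
          calc ∑ y, μ₀ y * ∑ z, wfPneutraln κ q n y z * wfPneutral κ q z x
              = ∑ y, ∑ z, μ₀ y * (wfPneutraln κ q n y z * wfPneutral κ q z x) := by
                exact Finset.sum_congr rfl fun y _ => Finset.mul_sum _ _ _
            _ = ∑ z, ∑ y, μ₀ y * (wfPneutraln κ q n y z * wfPneutral κ q z x) :=
                Finset.sum_comm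
            _ = ∑ z, ν z * wfPneutral κ q z x := by
                refine Finset.sum_congr rfl fun z _ => ?_
                rw [hν, Finset.sum_mul]
                exact Finset.sum_congr rfl fun y _ => by ring
      _ = ∑ z, ν z * ((1 / (m : ℝ)) * ∑ j, mutM κ q (z j) u) := by
          rw [Finset.sum_comm]
          refine Finset.sum_congr rfl fun z _ => ?_
          rw [← Finset.mul_sum, key z]
      _ = (1 / (m : ℝ)) * ∑ j, ∑ z, ν z * mutM κ q (z j) u :=
          sum_mul_const_mul_sum ν (1 / (m : ℝ)) (fun z j => mutM κ q (z j) u)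
      _ = ∑ w, (∑ v, (∑ x ∈ univ.filter
              (fun x : Fin m → Fin ℓ → Fin κ => x i0 = v), μ₀ x) * mutMn κ q n v w)
            * mutM κ q w u := by
          rw [Finset.sum_congr rfl fun j _ => hC j, Finset.sum_const, Finset.card_univ,
            Fintype.card_fin, nsmul_eq_mul]
          field_simp
      _ = ∑ v, (∑ x ∈ univ.filter (fun x : Fin m → Fin ℓ → Fin κ => x i0 = v), μ₀ x)
            * mutMn κ q (n + 1) v u := by
          set a : (Fin ℓ → Fin κ) → ℝ :=
            fun v => ∑ x ∈ univ.filter (fun x : Fin m → Fin ℓ → Fin κ => x i0 = v), μ₀ x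
          calc ∑ w, (∑ v, a v * mutMn κ q n v w) * mutM κ q w u
              = ∑ w, ∑ v, a v * (mutMn κ q n v w * mutM κ q w u) := by
                refine Finset.sum_congr rfl fun w _ => ?_
                rw [Finset.sum_mul]
                exact Finset.sum_congr rfl fun v _ => by ring
            _ = ∑ v, ∑ w, a v * (mutMn κ q n v w * mutM κ q w u) := Finset.sum_comm
            _ = ∑ v, a v * mutMn κ q (n + 1) v u := by
                refine Finset.sum_congr rfl fun v _ => ?_
                rw [show mutMn κ q (n + 1) v u
                    = ∑ w, mutMn κ q n v w * mutM κ q w u from rfl, Finset.mul_sum]
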